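/- Let X = {a_1,…,a_ℓ} be a finite set of ℓ distinct points and N ≥ 1. Every γ ∈ P_sym(X^N) can be represented uniquely as a convex combination of the measures γ_λ: there exist unique coefficients α_λ ≥ 0, λ ∈ P_{1/N}(X), with Σ_{λ ∈ P_{1/N}(X)} α_λ = 1, such that γ = Σ_{λ ∈ P_{1/N}(X)} α_λ γ_λ. -/

import Mathlib

open Finset

noncomputable def symmetrize (N ℓ : ℕ) (γ : (Fin N → Fin ℓ) → ℝ) : (Fin N → Fin ℓ) → ℝ :=
  fun x => (1 / (Nat.factorial N : ℝ)) * ∑ σ : Equiv.Perm (Fin N), γ (x ∘ σ)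

def IsProbVec {α : Type*} [Fintype α] (p : α → ℝ) : Prop :=
  (∀ x, 0 ≤ p x) ∧ ∑ x, p x = 1

def IsSymmFun (N ℓ : ℕ) (γ : (Fin N → Fin ℓ) → ℝ) : Prop :=
  ∀ (σ : Equiv.Perm (Fin N)) (x : Fin N → Fin ℓ), γ (x ∘ σ) = γ x

def PSym (N ℓ : ℕ) : Set ((Fin N → Fin ℓ) → ℝ) :=
  {γ | IsProbVec γ ∧ IsSymmFun N ℓ γ}

noncomputable def margOf (N ℓ : ℕ) (x : Fin N → Fin ℓ) : Fin ℓ → ℝ :=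
  fun j => ((Finset.univ.filter fun k => x k = j).card : ℝ) / (N : ℝ)

noncomputable def QuantFinset (N ℓ : ℕ) : Finset (Fin ℓ → ℝ) :=
  Finset.image (margOf N ℓ) Finset.univ

noncomputable def gammaLam (N ℓ : ℕ) (lam : Fin ℓ → ℝ) : (Fin N → Fin ℓ) → ℝ :=
  if h : ∃ i : Fin N → Fin ℓ, margOf N ℓ i = lam then
    symmetrize N ℓ (fun x => if x = h.choose then 1 else 0)
  else 0

noncomputable def marg1 (N ℓ : ℕ) [NeZero N] (γ : (Fin N → Fin ℓ) → ℝ) : Fin ℓ → ℝ :=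
  fun j => ∑ x : Fin N → Fin ℓ, if x 0 = j then γ x else 0

noncomputable def marg2 (N ℓ : ℕ) [NeZero N] (γ : (Fin N → Fin ℓ) → ℝ) : Fin ℓ → Fin ℓ → ℝ :=
  fun j k => ∑ x : Fin N → Fin ℓ, if x 0 = j ∧ x 1 = k then γ x else 0

noncomputable def cCoef (N ℓ : ℕ) (c : (Fin N → Fin ℓ) → ℝ) (lam : Fin ℓ → ℝ) : ℝ :=
  ∑ x : Fin N → Fin ℓ, gammaLam N ℓ lam x * c x

/-!
The `S_N`-orbits in `X^N` are exactly the fibres of the empirical measure `margOf`, and `γ_λ`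
is supported on the fibre over `λ`, constant there, and of total mass one. A symmetric `γ` is
constant on each fibre as well, so `γ = ∑ α_λ γ_λ` with `α_λ` the `γ`-mass of that fibre.
Conversely, summing any such representation over the fibre over `λ` picks out the coefficient
of `γ_λ` alone, since the `γ_μ` have disjoint supports; this gives uniqueness.
-/

lemma exists_perm_comp_eq_of_card_fiber_eq {ι α : Type*} [Fintype ι] [DecidableEq α]
    {x y : ι → α} (h : ∀ a, #{i | x i = a} = #{i | y i = a}) :
    ∃ σ : Equiv.Perm ι, y ∘ σ = x := by
  have e : ∀ a, {i // x i = a} ≃ {i // y i = a} := fun a =>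
    Fintype.equivOfCardEq (by simpa only [Fintype.card_subtype] using h a)
  exact ⟨Equiv.ofFiberEquiv e, funext (Equiv.ofFiberEquiv_map e)⟩

lemma margOf_comp_perm (N ℓ : ℕ) (x : Fin N → Fin ℓ) (σ : Equiv.Perm (Fin N)) :
    margOf N ℓ (x ∘ σ) = margOf N ℓ x := by
  funext j
  unfold margOf
  congr 2
  exact card_bij' (fun k _ => σ k) (fun k _ => σ.symm k) (by simp) (by simp) (by simp) (by simp)

lemma exists_perm_of_margOf_eq {N ℓ : ℕ} {x y : Fin N → Fin ℓ}
    (h : margOf N ℓ x = margOf N ℓ y) : ∃ σ : Equiv.Perm (Fin N), y ∘ σ = x := by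
  refine exists_perm_comp_eq_of_card_fiber_eq fun j => ?_
  rcases eq_or_ne N 0 with rfl | hN
  · simp
  · exact_mod_cast (div_left_inj' (Nat.cast_ne_zero.2 hN)).1 (congrFun h j)

lemma IsSymmFun.apply_eq_of_margOf_eq {N ℓ : ℕ} {f : (Fin N → Fin ℓ) → ℝ}
    (hf : IsSymmFun N ℓ f) {x y : Fin N → Fin ℓ} (h : margOf N ℓ x = margOf N ℓ y) :
    f x = f y := by
  obtain ⟨σ, rfl⟩ := exists_perm_of_margOf_eq h
  exact hf σ y

lemma isSymmFun_symmetrize (N ℓ : ℕ) (f : (Fin N → Fin ℓ) → ℝ) :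
    IsSymmFun N ℓ (symmetrize N ℓ f) := fun σ x => by
  unfold symmetrize
  congr 1
  exact Fintype.sum_equiv (Equiv.mulLeft σ) _ _ fun τ => rfl

lemma sum_symmetrize (N ℓ : ℕ) (f : (Fin N → Fin ℓ) → ℝ) :
    ∑ x, symmetrize N ℓ f x = ∑ x, f x := by
  have hσ : ∀ σ : Equiv.Perm (Fin N), ∑ x, f (x ∘ σ) = ∑ x, f x := fun σ =>
    Equiv.sum_comp (σ.symm.arrowCongr (Equiv.refl _)) f
  simp only [symmetrize, ← mul_sum]
  rw [sum_comm]
  simp only [hσ, sum_const, card_univ, Fintype.card_perm, Fintype.card_fin, nsmul_eq_mul]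
  field_simp

lemma isSymmFun_gammaLam (N ℓ : ℕ) (lam : Fin ℓ → ℝ) : IsSymmFun N ℓ (gammaLam N ℓ lam) := by
  unfold gammaLam
  split_ifs
  · exact isSymmFun_symmetrize N ℓ _
  · exact fun _ _ => rfl

lemma gammaLam_eq_zero_of_margOf_ne {N ℓ : ℕ} {lam : Fin ℓ → ℝ} {x : Fin N → Fin ℓ}
    (h : margOf N ℓ x ≠ lam) : gammaLam N ℓ lam x = 0 := by
  unfold gammaLam
  split_ifs with hlam
  · refine mul_eq_zero_of_right _ (sum_eq_zero fun σ _ => if_neg fun hx => h ?_)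
    rw [← margOf_comp_perm N ℓ x σ, hx, hlam.choose_spec]
  · rfl

lemma sum_gammaLam {N ℓ : ℕ} {lam : Fin ℓ → ℝ} (hlam : lam ∈ QuantFinset N ℓ) :
    ∑ x, gammaLam N ℓ lam x = 1 := by
  have hex : ∃ i, margOf N ℓ i = lam := by simpa [QuantFinset] using hlam
  simp [gammaLam, dif_pos hex, sum_symmetrize]

lemma sum_margFiber_gammaLam {N ℓ : ℕ} {lam μ : Fin ℓ → ℝ} (hμ : μ ∈ QuantFinset N ℓ) :
    ∑ x with margOf N ℓ x = lam, gammaLam N ℓ μ x = if μ = lam then 1 else 0 := by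
  split_ifs with h
  · subst h
    rw [sum_filter_of_ne fun x _ hx => by_contra fun h => hx (gammaLam_eq_zero_of_margOf_ne h),
      sum_gammaLam hμ]
  · exact sum_eq_zero fun x hx => gammaLam_eq_zero_of_margOf_ne <| by
      rw [(mem_filter.1 hx).2]; exact Ne.symm h

lemma IsSymmFun.sum_margFiber {N ℓ : ℕ} {f : (Fin N → Fin ℓ) → ℝ} (hf : IsSymmFun N ℓ f)
    (x : Fin N → Fin ℓ) :
    ∑ y with margOf N ℓ y = margOf N ℓ x, f y = #{y | margOf N ℓ y = margOf N ℓ x} * f x := by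
  rw [sum_congr rfl fun y hy => hf.apply_eq_of_margOf_eq (mem_filter.1 hy).2, sum_const,
    nsmul_eq_mul]

noncomputable def fiberMass (N ℓ : ℕ) (γ : (Fin N → Fin ℓ) → ℝ) (lam : Fin ℓ → ℝ) : ℝ :=
  ∑ x with margOf N ℓ x = lam, γ x

lemma fiberMass_eq_zero_of_not_mem {N ℓ : ℕ} (γ : (Fin N → Fin ℓ) → ℝ) {lam : Fin ℓ → ℝ}
    (hlam : lam ∉ QuantFinset N ℓ) : fiberMass N ℓ γ lam = 0 :=
  sum_eq_zero fun x hx => absurd ((mem_filter.1 hx).2 ▸ mem_image_of_mem _ (mem_univ x)) hlam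

lemma sum_fiberMass (N ℓ : ℕ) (γ : (Fin N → Fin ℓ) → ℝ) :
    ∑ lam ∈ QuantFinset N ℓ, fiberMass N ℓ γ lam = ∑ x, γ x :=
  sum_fiberwise_of_maps_to (fun x _ => mem_image_of_mem _ (mem_univ x)) γ

lemma IsSymmFun.eq_sum_fiberMass_mul_gammaLam {N ℓ : ℕ} {γ : (Fin N → Fin ℓ) → ℝ}
    (hγ : IsSymmFun N ℓ γ) (x : Fin N → Fin ℓ) :
    γ x = ∑ lam ∈ QuantFinset N ℓ, fiberMass N ℓ γ lam * gammaLam N ℓ lam x := by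
  have hx : margOf N ℓ x ∈ QuantFinset N ℓ := mem_image_of_mem _ (mem_univ x)
  rw [sum_eq_single_of_mem _ hx fun lam _ hne =>
    by rw [gammaLam_eq_zero_of_margOf_ne (Ne.symm hne), mul_zero]]
  have hone := sum_margFiber_gammaLam (lam := margOf N ℓ x) hx
  rw [if_pos rfl, (isSymmFun_gammaLam N ℓ _).sum_margFiber] at hone
  rw [fiberMass, hγ.sum_margFiber, mul_comm _ (γ x), mul_assoc, hone, mul_one]

lemma fiberMass_eq_of_eq_sum_mul_gammaLam {N ℓ : ℕ} {γ : (Fin N → Fin ℓ) → ℝ}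
    {β : (Fin ℓ → ℝ) → ℝ}
    (hβ : ∀ x, γ x = ∑ lam ∈ QuantFinset N ℓ, β lam * gammaLam N ℓ lam x)
    {lam : Fin ℓ → ℝ} (hlam : lam ∈ QuantFinset N ℓ) : fiberMass N ℓ γ lam = β lam := by
  simp only [fiberMass, hβ]
  rw [sum_comm, sum_congr rfl fun μ hμ => by
    rw [← mul_sum, sum_margFiber_gammaLam hμ, mul_ite, mul_one, mul_zero], sum_ite_eq', if_pos hlam]

theorem unique_extremal_representation_general (ℓ N : ℕ)
    (γ : (Fin N → Fin ℓ) → ℝ) (hγ : γ ∈ PSym N ℓ) :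
    ∃! α : (Fin ℓ → ℝ) → ℝ,
      (∀ lam, 0 ≤ α lam) ∧
      (∀ lam ∉ QuantFinset N ℓ, α lam = 0) ∧
      (∑ lam ∈ QuantFinset N ℓ, α lam = 1) ∧
      ∀ x, γ x = ∑ lam ∈ QuantFinset N ℓ, α lam * gammaLam N ℓ lam x := by
  obtain ⟨⟨hnonneg, hsum⟩, hsymm⟩ := hγ
  refine ⟨fiberMass N ℓ γ, ⟨fun lam => sum_nonneg fun x _ => hnonneg x,
    fun lam => fiberMass_eq_zero_of_not_mem γ, (sum_fiberMass N ℓ γ).trans hsum,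
    hsymm.eq_sum_fiberMass_mul_gammaLam⟩, ?_⟩
  rintro β ⟨-, hβout, -, hβ⟩
  funext lam
  by_cases hlam : lam ∈ QuantFinset N ℓ
  · exact (fiberMass_eq_of_eq_sum_mul_gammaLam hβ hlam).symm
  · rw [hβout lam hlam, fiberMass_eq_zero_of_not_mem γ hlam]

/-- Every symmetric probability measure on X^N is a unique convex
combination of the extreme measures γ_λ, λ ∈ P_{1/N}(X). -/
theorem unique_extremal_representation (ℓ N : ℕ) [NeZero N]
    (γ : (Fin N → Fin ℓ) → ℝ) (hγ : γ ∈ PSym N ℓ) :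
    ∃! α : (Fin ℓ → ℝ) → ℝ,
      (∀ lam, 0 ≤ α lam) ∧
      (∀ lam ∉ QuantFinset N ℓ, α lam = 0) ∧
      (∑ lam ∈ QuantFinset N ℓ, α lam = 1) ∧
      ∀ x, γ x = ∑ lam ∈ QuantFinset N ℓ, α lam * gammaLam N ℓ lam x :=
  unique_extremal_representation_general ℓ N γ hγ
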